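/- arXiv:2507.21543 — 2 statements merged into one kernel-verified Lean document; each statement's English description precedes it below -/
import Mathlib

section
/- If in addition each A_k (k = 0,…,T−1) is invertible, then for every k ∈ {0,…,T} the matrix Π_k defined by the backward Riccati recursion is symmetric positive definite. -/
open Matrix Filter Topology

/-- The unique symmetric positive semidefinite square root of a positive
semidefinite real matrix (junk value `0` if the matrix is not PSD). -/
noncomputable def msqrt {d : ℕ} (X : Matrix (Fin d) (Fin d) ℝ) :
    Matrix (Fin d) (Fin d) ℝ :=
  letI := Classical.propDecidable X.PosSemidef
  if h : X.PosSemidef then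
    (h.1.eigenvectorUnitary : Matrix (Fin d) (Fin d) ℝ) *
      diagonal ((↑) ∘ (√·) ∘ h.1.eigenvalues) *
      (star h.1.eigenvectorUnitary : Matrix (Fin d) (Fin d) ℝ)
  else 0

/-- The Frobenius norm of a real square matrix. -/
noncomputable def frob {d : ℕ} (X : Matrix (Fin d) (Fin d) ℝ) : ℝ :=
  Real.sqrt (∑ i, ∑ j, X i j ^ 2)

/-- Data of the mutual information optimal control problem for a discrete-time
linear system `x_{k+1} = A_k x_k + B_k u_k + w_k`. -/
structure LQData (n m : ℕ) where
  ε : ℝ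
  A : ℕ → Matrix (Fin n) (Fin n) ℝ
  B : ℕ → Matrix (Fin n) (Fin m) ℝ
  R : ℕ → Matrix (Fin m) (Fin m) ℝ
  F : Matrix (Fin n) (Fin n) ℝ
  Sw : ℕ → Matrix (Fin n) (Fin n) ℝ
  Sini : Matrix (Fin n) (Fin n) ℝ

namespace LQData

variable {n m : ℕ} (P : LQData n m) (T : ℕ) (Srho : ℕ → Matrix (Fin m) (Fin m) ℝ)

/-- The backward Riccati recursion `Π_k` associated with the prior covariances
`Σ_{ρ_k}`: `Π_T = F` and
`Π_k = A_kᵀ Π_{k+1} A_k − (1/ε) A_kᵀ Π_{k+1} B_k Σ^{1/2} (I + Σ^{1/2} C_k Σ^{1/2})⁻¹ Σ^{1/2} B_kᵀ Π_{k+1} A_k`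
with `C_k = (R_k + B_kᵀ Π_{k+1} B_k)/ε`. -/
noncomputable def Ric (k : ℕ) : Matrix (Fin n) (Fin n) ℝ :=
  if h : T ≤ k then P.F
  else
    let Pk := Ric (k + 1)
    let S := msqrt (Srho k)
    let C := (1 / P.ε) • (P.R k + (P.B k)ᵀ * Pk * P.B k)
    (P.A k)ᵀ * Pk * P.A k -
      (1 / P.ε) • ((P.A k)ᵀ * Pk * P.B k * S * (1 + S * C * S)⁻¹ * S * (P.B k)ᵀ * Pk * P.A k)
termination_by T - k
decreasing_by omega

/-- `C_k = (R_k + B_kᵀ Π_{k+1} B_k)/ε`. -/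
noncomputable def Ck (k : ℕ) : Matrix (Fin m) (Fin m) ℝ :=
  (1 / P.ε) • (P.R k + (P.B k)ᵀ * P.Ric T Srho (k + 1) * P.B k)

/-- `Σ_{Q_k} = ε (R_k + B_kᵀ Π_{k+1} B_k)⁻¹`. -/
noncomputable def SigQ (k : ℕ) : Matrix (Fin m) (Fin m) ℝ :=
  P.ε • (P.R k + (P.B k)ᵀ * P.Ric T Srho (k + 1) * P.B k)⁻¹

/-- Covariance `Σ_{π_k}` of the optimal policy for the fixed prior. -/
noncomputable def SigPi (k : ℕ) : Matrix (Fin m) (Fin m) ℝ :=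
  msqrt (Srho k) * (1 + msqrt (Srho k) * P.Ck T Srho k * msqrt (Srho k))⁻¹ * msqrt (Srho k)

/-- Feedback gain `P_k = −(1/ε) Σ_{π_k} B_kᵀ Π_{k+1} A_k`. -/
noncomputable def Pgain (k : ℕ) : Matrix (Fin m) (Fin n) ℝ :=
  -((1 / P.ε) • (P.SigPi T Srho k * (P.B k)ᵀ * P.Ric T Srho (k + 1) * P.A k))

/-- Forward state covariance recursion under the optimal policy. -/
noncomputable def Sigx : ℕ → Matrix (Fin n) (Fin n) ℝ
  | 0 => P.Sini
  | k + 1 =>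
    (P.A k + P.B k * P.Pgain T Srho k) * Sigx k *
        (P.A k + P.B k * P.Pgain T Srho k)ᵀ +
      P.B k * P.SigPi T Srho k * (P.B k)ᵀ + P.Sw k

/-- The standard LQR Riccati recursion `Π̌_k`. -/
noncomputable def RicLQR (k : ℕ) : Matrix (Fin n) (Fin n) ℝ :=
  if h : T ≤ k then P.F
  else
    let Pk := RicLQR (k + 1)
    (P.A k)ᵀ * Pk * P.A k -
      (P.A k)ᵀ * Pk * P.B k * (P.R k + (P.B k)ᵀ * Pk * P.B k)⁻¹ * (P.B k)ᵀ * Pk * P.A k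
termination_by T - k
decreasing_by omega

/-- `Π̂_k = A_kᵀ ⋯ A_{T−1}ᵀ F A_{T−1} ⋯ A_k`. -/
noncomputable def RicHat (k : ℕ) : Matrix (Fin n) (Fin n) ℝ :=
  if h : T ≤ k then P.F
  else (P.A k)ᵀ * RicHat (k + 1) * P.A k
termination_by T - k
decreasing_by omega

/-- `Σ_{w_{k−1}}` with the convention `Σ_{w_{−1}} := Σ_{x_ini}`. -/
noncomputable def Swm1 (k : ℕ) : Matrix (Fin n) (Fin n) ℝ :=
  if k = 0 then P.Sini else P.Sw (k - 1)

/-- The matrix `M̌_k` from the sufficient condition for stochastic optimal policies. -/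
noncomputable def Mcheck (k : ℕ) : Matrix (Fin m) (Fin m) ℝ :=
  (P.R k + (P.B k)ᵀ * P.RicHat T (k + 1) * P.B k)⁻¹ *
      ((P.B k)ᵀ * P.RicLQR T (k + 1) * P.A k * P.Swm1 k * (P.A k)ᵀ *
        P.RicLQR T (k + 1) * P.B k) *
      (P.R k + (P.B k)ᵀ * P.RicHat T (k + 1) * P.B k)⁻¹ -
    P.ε • (P.R k + (P.B k)ᵀ * P.RicLQR T (k + 1) * P.B k)⁻¹

/-- State covariance under the zero control input. -/
noncomputable def SigxZero : ℕ → Matrix (Fin n) (Fin n) ℝ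
  | 0 => P.Sini
  | k + 1 => P.A k * SigxZero k * (P.A k)ᵀ + P.Sw k

/-- The matrix `M̂_k^zero` from the sufficient condition for deterministic optimal policies. -/
noncomputable def MhatZero (k : ℕ) : Matrix (Fin m) (Fin m) ℝ :=
  (P.R k + (P.B k)ᵀ * P.RicLQR T (k + 1) * P.B k)⁻¹ *
      ((P.B k)ᵀ * P.RicHat T (k + 1) * P.A k * P.SigxZero k * (P.A k)ᵀ *
        P.RicHat T (k + 1) * P.B k) *
      (P.R k + (P.B k)ᵀ * P.RicLQR T (k + 1) * P.B k)⁻¹ -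
    P.ε • (P.R k + (P.B k)ᵀ * P.RicHat T (k + 1) * P.B k)⁻¹


/-- The backward recursion `r_k` for the mean offset:
`r_T = 0` and `r_k = A_k⁻¹ r_{k+1} − Π_k⁻¹ A_kᵀ Π_{k+1} B_k (I + Σ_{ρ_k} C_k)⁻¹ μ_{ρ_k}`. -/
noncomputable def rvec (μ : ℕ → Fin m → ℝ) (k : ℕ) : Fin n → ℝ :=
  if h : T ≤ k then 0
  else
    ((P.A k)⁻¹).mulVec (rvec μ (k + 1)) -
      ((P.Ric T Srho k)⁻¹ * ((P.A k)ᵀ * P.Ric T Srho (k + 1) * P.B k *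
        (1 + Srho k * P.Ck T Srho k)⁻¹)).mulVec (μ k)
termination_by T - k
decreasing_by omega

/-- `Θ_k = ε C_k − ε C_k Σ_{π_k} C_k − (I − C_k Σ_{π_k}) B_kᵀ Π_{k+1} A_k Π_k⁻¹ A_kᵀ Π_{k+1} B_k (I − Σ_{π_k} C_k)`. -/
noncomputable def Theta (k : ℕ) : Matrix (Fin m) (Fin m) ℝ :=
  P.ε • P.Ck T Srho k - P.ε • (P.Ck T Srho k * P.SigPi T Srho k * P.Ck T Srho k) -
    (1 - P.Ck T Srho k * P.SigPi T Srho k) *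
      ((P.B k)ᵀ * P.Ric T Srho (k + 1) * P.A k * (P.Ric T Srho k)⁻¹ *
        ((P.A k)ᵀ * P.Ric T Srho (k + 1) * P.B k)) *
      (1 - P.SigPi T Srho k * P.Ck T Srho k)

end LQData

/-- Extend a `T`-tuple of matrices to a function on `ℕ` (by zero). -/
def extT {m : ℕ} (T : ℕ) (σ : Fin T → Matrix (Fin m) (Fin m) ℝ) :
    ℕ → Matrix (Fin m) (Fin m) ℝ :=
  fun k => if h : k < T then σ ⟨k, h⟩ else 0


/-- Extend a `T`-tuple of vectors to a function on `ℕ` (by zero). -/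
def extV {m : ℕ} (T : ℕ) (μ : Fin T → Fin m → ℝ) : ℕ → Fin m → ℝ :=
  fun k => if h : k < T then μ ⟨k, h⟩ else 0

namespace LQData

variable {n m : ℕ} (P : LQData n m) (T : ℕ)

/-- The reduced objective `J̌` as a function of the `T`-tuple of prior covariances. -/
noncomputable def Jcheck (σ : Fin T → Matrix (Fin m) (Fin m) ℝ) : ℝ :=
  (1 / 2) * ((P.Ric T (extT T σ) 0 * P.Sini).trace +
    ∑ k : Fin T,
      (P.ε * Real.log ((extT T σ k + P.SigQ T (extT T σ) k).det / (P.SigQ T (extT T σ) k).det) +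
        (P.Ric T (extT T σ) (k + 1) * P.Sw k).trace))

/-- `L_k = (Σ_{Q_k} + Σ_{ρ_k})⁻¹`. -/
noncomputable def Lmat (Srho : ℕ → Matrix (Fin m) (Fin m) ℝ) (k : ℕ) :
    Matrix (Fin m) (Fin m) ℝ :=
  (P.SigQ T Srho k + Srho k)⁻¹

/-- `E_k = (1/ε) Σ_{Q_k} B_kᵀ Π_{k+1} A_k`. -/
noncomputable def Emat (Srho : ℕ → Matrix (Fin m) (Fin m) ℝ) (k : ℕ) :
    Matrix (Fin m) (Fin n) ℝ :=
  (1 / P.ε) • (P.SigQ T Srho k * (P.B k)ᵀ * P.Ric T Srho (k + 1) * P.A k)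

/-- `J̌'_k = (ε/2) L_k (Σ_{ρ_k} + Σ_{Q_k} − E_k Σ_{x_k} E_kᵀ) L_k`. -/
noncomputable def Jprime (Srho : ℕ → Matrix (Fin m) (Fin m) ℝ) (k : ℕ) :
    Matrix (Fin m) (Fin m) ℝ :=
  (P.ε / 2) • (P.Lmat T Srho k *
    (Srho k + P.SigQ T Srho k - P.Emat T Srho k * P.Sigx T Srho k * (P.Emat T Srho k)ᵀ) *
    P.Lmat T Srho k)

/-- The alternating-optimization update map `𝒯` on `T`-tuples of prior covariances:
`𝒯(σ)_k = Σ_{π_k} + P_k Σ_{x_k} P_kᵀ`. -/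
noncomputable def Tmap (σ : Fin T → Matrix (Fin m) (Fin m) ℝ) :
    Fin T → Matrix (Fin m) (Fin m) ℝ :=
  fun k =>
    P.SigPi T (extT T σ) k +
      P.Pgain T (extT T σ) k * P.Sigx T (extT T σ) k * (P.Pgain T (extT T σ) k)ᵀ

/-- The objective `J` as a function of the prior means, for fixed prior covariances:
`J(μ) = (1/2)( r_0ᵀ Π_0 r_0 + Σ_k μ_{ρ_k}ᵀ Θ_k μ_{ρ_k} )`. -/
noncomputable def Jmean (Srho : ℕ → Matrix (Fin m) (Fin m) ℝ) (μ : Fin T → Fin m → ℝ) : ℝ :=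
  (1 / 2) *
    (P.rvec T Srho (extV T μ) 0 ⬝ᵥ (P.Ric T Srho 0).mulVec (P.rvec T Srho (extV T μ) 0) +
      ∑ k : Fin T, μ k ⬝ᵥ (P.Theta T Srho k).mulVec (μ k))

end LQData

open Matrix Filter Topology LQData

/-!
Write `Π = Π_{k+1}`, `S = Σ_{ρ_k}^{1/2}` and `U = B_k S`. Since
`(1/ε) (I + S C_k S)⁻¹ = (ε I + S R_k S + Uᵀ Π U)⁻¹`, one step of the recursion reads
`Π_k = A_kᵀ (Π - Π U (H + Uᵀ Π U)⁻¹ Uᵀ Π) A_k` with `H = ε I + S R_k S ≻ 0`.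
By the Woodbury identity the middle factor is `(Π⁻¹ + U H⁻¹ Uᵀ)⁻¹ ≻ 0`, and congruence by the
invertible `A_k` preserves positive definiteness; induct backwards from `Π_T = F`.
-/

open scoped ComplexOrder

namespace Matrix

variable {𝕜 ι κ : Type*} [RCLike 𝕜] [Fintype ι] [Fintype κ] [DecidableEq ι] [DecidableEq κ]

theorem inv_add_mul_inv_mul_conjTranspose {P : Matrix ι ι 𝕜} {H : Matrix κ κ 𝕜}
    (U : Matrix ι κ 𝕜) (hP : IsUnit P) (hH : IsUnit H) (hHP : IsUnit (H + Uᴴ * P * U)) :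
    (P⁻¹ + U * H⁻¹ * Uᴴ)⁻¹ = P - P * U * (H + Uᴴ * P * U)⁻¹ * Uᴴ * P := by
  have hP' : IsUnit P.det := (isUnit_iff_isUnit_det P).mp hP
  have hH' : IsUnit H.det := (isUnit_iff_isUnit_det H).mp hH
  rw [add_mul_mul_inv_eq_sub _ _ _ _ (isUnit_nonsing_inv_iff.mpr hP)
    (isUnit_nonsing_inv_iff.mpr hH)] <;> simp only [nonsing_inv_nonsing_inv _ hP',
    nonsing_inv_nonsing_inv _ hH', hHP]

theorem PosDef.sub_mul_inv_add_mul_mul_posDef {P : Matrix ι ι 𝕜} {H : Matrix κ κ 𝕜}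
    (hP : P.PosDef) (hH : H.PosDef) (U : Matrix ι κ 𝕜) :
    (P - P * U * (H + Uᴴ * P * U)⁻¹ * Uᴴ * P).PosDef := by
  have hHP : (H + Uᴴ * P * U).PosDef :=
    hH.add_posSemidef (hP.posSemidef.conjTranspose_mul_mul_same U)
  rw [← inv_add_mul_inv_mul_conjTranspose U hP.isUnit hH.isUnit hHP.isUnit]
  exact (hP.inv.add_posSemidef (hH.inv.posSemidef.mul_mul_conjTranspose_same U)).inv

theorem riccati_step_posDef {ε : ℝ} (hε : 0 < ε) {P : Matrix ι ι ℝ} {R S : Matrix κ κ ℝ}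
    (hP : P.PosDef) (hR : R.PosDef) (hS : S.IsHermitian) {A : Matrix ι ι ℝ} (hA : IsUnit A)
    (B : Matrix ι κ ℝ) :
    (Aᵀ * P * A - (1 / ε) • (Aᵀ * P * B * S * (1 + S * ((1 / ε) • (R + Bᵀ * P * B)) * S)⁻¹ *
      S * Bᵀ * P * A)).PosDef := by
  set H : Matrix κ κ ℝ := ε • 1 + S * R * S
  have hH : H.PosDef := by
    have := hR.posSemidef.conjTranspose_mul_mul_same S
    rw [hS.eq] at this
    exact (PosDef.one.smul hε).add_posSemidef this
  have hSt : Sᵀ = S := by simpa using hS.eq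
  have hK : 1 + S * ((1 / ε) • (R + Bᵀ * P * B)) * S = ε⁻¹ • (H + (B * S)ᵀ * P * (B * S)) := by
    simp only [H, transpose_mul, hSt, smul_add, smul_smul, inv_mul_cancel₀ hε.ne', one_smul,
      mul_add, add_mul, Matrix.mul_smul, Matrix.smul_mul, one_div, Matrix.mul_assoc]
    abel
  have hHP : (H + (B * S)ᵀ * P * (B * S)).PosDef := by
    simpa using hH.add_posSemidef (hP.posSemidef.conjTranspose_mul_mul_same (B * S))
  let _ : Invertible ε⁻¹ := invertibleOfNonzero (inv_ne_zero hε.ne')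
  rw [hK, inv_smul _ _ ((isUnit_iff_isUnit_det _).mp hHP.isUnit), invOf_eq_inv, inv_inv]
  have := hA.posDef_star_left_conjugate_iff.mpr (hP.sub_mul_inv_add_mul_mul_posDef hH (B * S))
  convert this using 1
  simp only [star_eq_conjTranspose, conjTranspose_eq_transpose_of_trivial, transpose_mul, hSt,
    mul_sub, sub_mul, Matrix.mul_smul, Matrix.smul_mul, smul_smul, one_div,
    inv_mul_cancel₀ hε.ne', one_smul, Matrix.mul_assoc]

end Matrix

theorem isHermitian_msqrt {d : ℕ} (X : Matrix (Fin d) (Fin d) ℝ) : (msqrt X).IsHermitian := by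
  unfold msqrt
  split_ifs with h
  · simpa [star_eq_conjTranspose] using isHermitian_mul_mul_conjTranspose
      (h.1.eigenvectorUnitary : Matrix (Fin d) (Fin d) ℝ) (isHermitian_diagonal _)
  · exact isHermitian_zero

namespace LQData

variable {n m : ℕ} (P : LQData n m) (T : ℕ) (Srho : ℕ → Matrix (Fin m) (Fin m) ℝ)

theorem Ric_of_le {k : ℕ} (hk : T ≤ k) : P.Ric T Srho k = P.F := by
  rw [Ric, dif_pos hk]

theorem Ric_of_lt {k : ℕ} (hk : k < T) :
    P.Ric T Srho k = (P.A k)ᵀ * P.Ric T Srho (k + 1) * P.A k -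
      (1 / P.ε) • ((P.A k)ᵀ * P.Ric T Srho (k + 1) * P.B k * msqrt (Srho k) *
        (1 + msqrt (Srho k) * ((1 / P.ε) • (P.R k + (P.B k)ᵀ * P.Ric T Srho (k + 1) * P.B k)) *
          msqrt (Srho k))⁻¹ * msqrt (Srho k) * (P.B k)ᵀ * P.Ric T Srho (k + 1) * P.A k) := by
  rw [Ric, dif_neg (not_le.mpr hk)]

end LQData

theorem riccati_posDef_general {n m : ℕ} (T : ℕ)
    (P : LQData n m) (hε : 0 < P.ε)
    (hA : ∀ k < T, IsUnit (P.A k))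
    (hR : ∀ k < T, (P.R k).PosDef)
    (hF : P.F.PosDef)
    (Srho : ℕ → Matrix (Fin m) (Fin m) ℝ) :
    ∀ k ≤ T, (P.Ric T Srho k).PosDef := by
  intro k hk
  induction hk using Nat.decreasingInduction with
  | self => rwa [Ric_of_le _ _ _ le_rfl]
  | of_succ k hk ih =>
    rw [Ric_of_lt _ _ _ hk]
    exact riccati_step_posDef hε ih (hR k hk) (isHermitian_msqrt _) (hA k hk) (P.B k)

theorem riccati_posDef {n m : ℕ} (hn : 1 ≤ n) (hm : 1 ≤ m) (T : ℕ) (hT : 1 ≤ T)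
    (P : LQData n m) (hε : 0 < P.ε)
    (hA : ∀ k < T, IsUnit (P.A k))
    (hR : ∀ k < T, (P.R k).PosDef) (hSw : ∀ k < T, (P.Sw k).PosDef)
    (hF : P.F.PosDef) (hSini : P.Sini.PosDef)
    (Srho : ℕ → Matrix (Fin m) (Fin m) ℝ) (hSrho : ∀ k < T, (Srho k).PosSemidef) :
    ∀ k ≤ T, (P.Ric T Srho k).PosDef :=
  riccati_posDef_general T P hε hA hR hF Srho
end

section
/- The map f(Y) = Y^{1/2} (I + Y^{1/2} B R^{−1} Bᵀ Y^{1/2})^{−1} Y^{1/2} on symmetric positive semidefinite n×n matrices is monotone with respect to the Loewner order: for all symmetric positive semidefinite Y₁, Y₂ with Y₁ ⪰ Y₂, one has f(Y₁) ⪰ f(Y₂). -/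
open Matrix Filter Topology

open Matrix Filter Topology LQData

/-!
With `S = msqrt Y` we have `S * S = Y`, so the Woodbury identity turns
`S (1 + S B R⁻¹ Bᵀ S)⁻¹ S` into the Kalman covariance update `Y - Y B K⁻¹ Bᵀ Y`, `K = R + Bᵀ Y B`.
Completing the square, the Joseph form `(1 - G Bᵀ) Y (1 - G Bᵀ)ᵀ + G R Gᵀ` exceeds this update by
`(G - Y B K⁻¹) K (G - Y B K⁻¹)ᵀ ⪰ 0`, with equality at the Kalman gain `G = Y B K⁻¹`. Thus the
update is a Loewner-pointwise minimum of Joseph forms, each monotone in `Y`: with `G` the Kalman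
gain of `Y₁`, `f Y₂ ⪯ joseph G Y₂ ⪯ joseph G Y₁ = f Y₁`.
-/

open scoped MatrixOrder ComplexOrder

section KalmanUpdate

variable {𝕜 ι κ : Type*} [RCLike 𝕜] [Fintype ι] [DecidableEq ι] [Fintype κ] [DecidableEq κ]

omit [DecidableEq κ] in
def josephForm (B : Matrix ι κ 𝕜) (R : Matrix κ κ 𝕜) (G : Matrix ι κ 𝕜) (Y : Matrix ι ι 𝕜) :
    Matrix ι ι 𝕜 :=
  (1 - G * Bᴴ) * Y * (1 - G * Bᴴ)ᴴ + G * R * Gᴴ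

noncomputable def kalmanUpdate (B : Matrix ι κ 𝕜) (R : Matrix κ κ 𝕜) (Y : Matrix ι ι 𝕜) :
    Matrix ι ι 𝕜 :=
  Y - Y * B * (R + Bᴴ * Y * B)⁻¹ * Bᴴ * Y

theorem josephForm_eq_kalmanUpdate_add {B : Matrix ι κ 𝕜} {R : Matrix κ κ 𝕜}
    {Y : Matrix ι ι 𝕜} (hY : Y.IsHermitian) (hR : R.IsHermitian) (hK : IsUnit (R + Bᴴ * Y * B))
    (G : Matrix ι κ 𝕜) :
    josephForm B R G Y = kalmanUpdate B R Y +
      (G - Y * B * (R + Bᴴ * Y * B)⁻¹) * (R + Bᴴ * Y * B) *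
        (G - Y * B * (R + Bᴴ * Y * B)⁻¹)ᴴ := by
  set K := R + Bᴴ * Y * B with hKdef
  have hKdet : IsUnit K.det := (isUnit_iff_isUnit_det K).1 hK
  have hKH : K⁻¹ᴴ = K⁻¹ := by
    rw [conjTranspose_nonsing_inv, hKdef, conjTranspose_add, hR.eq,
      conjTranspose_mul, conjTranspose_mul, hY.eq, conjTranspose_conjTranspose, Matrix.mul_assoc]
  have hleft : (G - Y * B * K⁻¹) * K = G * K - Y * B := by
    rw [Matrix.sub_mul, Matrix.mul_assoc _ K⁻¹, nonsing_inv_mul K hKdet, Matrix.mul_one]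
  have hright : (G - Y * B * K⁻¹)ᴴ = Gᴴ - K⁻¹ * (Bᴴ * Y) := by
    rw [conjTranspose_sub, conjTranspose_mul, conjTranspose_mul, hKH, hY.eq]
  rw [hleft, hright, josephForm, kalmanUpdate, conjTranspose_sub, conjTranspose_one,
    conjTranspose_mul, conjTranspose_conjTranspose]
  simp only [Matrix.mul_sub, Matrix.sub_mul, Matrix.mul_one, Matrix.one_mul, Matrix.mul_assoc,
    mul_nonsing_inv_cancel_left _ _ hKdet]
  simp only [hKdef, Matrix.mul_add, Matrix.add_mul, Matrix.mul_assoc]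
  abel

theorem kalmanUpdate_eq_josephForm {B : Matrix ι κ 𝕜} {R : Matrix κ κ 𝕜} {Y : Matrix ι ι 𝕜}
    (hY : Y.IsHermitian) (hR : R.IsHermitian) (hK : IsUnit (R + Bᴴ * Y * B)) :
    kalmanUpdate B R Y = josephForm B R (Y * B * (R + Bᴴ * Y * B)⁻¹) Y := by
  simp [josephForm_eq_kalmanUpdate_add hY hR hK]

theorem kalmanUpdate_le_josephForm {B : Matrix ι κ 𝕜} {R : Matrix κ κ 𝕜} {Y : Matrix ι ι 𝕜}
    (hY : Y.PosSemidef) (hR : R.PosDef) (G : Matrix ι κ 𝕜) :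
    kalmanUpdate B R Y ≤ josephForm B R G Y := by
  have hK : (R + Bᴴ * Y * B).PosDef := hR.add_posSemidef (hY.conjTranspose_mul_mul_same B)
  rw [josephForm_eq_kalmanUpdate_add hY.isHermitian hR.isHermitian hK.isUnit G]
  exact le_add_of_nonneg_right (hK.posSemidef.mul_mul_conjTranspose_same _).nonneg

omit [DecidableEq κ] in
theorem josephForm_mono (B : Matrix ι κ 𝕜) (R : Matrix κ κ 𝕜) (G : Matrix ι κ 𝕜) :
    Monotone (josephForm B R G) := fun Y₂ Y₁ h => by
  rw [le_iff, josephForm, josephForm, add_sub_add_right_eq_sub, ← Matrix.sub_mul,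
    ← Matrix.mul_sub]
  exact h.mul_mul_conjTranspose_same _

theorem kalmanUpdate_mono {B : Matrix ι κ 𝕜} {R : Matrix κ κ 𝕜} {Y₁ Y₂ : Matrix ι ι 𝕜}
    (hR : R.PosDef) (hY₂ : Y₂.PosSemidef) (h : Y₂ ≤ Y₁) :
    kalmanUpdate B R Y₂ ≤ kalmanUpdate B R Y₁ := by
  have hY₁ : Y₁.PosSemidef := (hY₂.nonneg.trans h).posSemidef
  have hK₁ : (R + Bᴴ * Y₁ * B).PosDef := hR.add_posSemidef (hY₁.conjTranspose_mul_mul_same B)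
  calc kalmanUpdate B R Y₂
      ≤ josephForm B R (Y₁ * B * (R + Bᴴ * Y₁ * B)⁻¹) Y₂ := kalmanUpdate_le_josephForm hY₂ hR _
    _ ≤ josephForm B R (Y₁ * B * (R + Bᴴ * Y₁ * B)⁻¹) Y₁ := josephForm_mono B R _ h
    _ = kalmanUpdate B R Y₁ :=
      (kalmanUpdate_eq_josephForm hY₁.isHermitian hR.isHermitian hK₁.isUnit).symm

end KalmanUpdate

theorem Matrix.mul_inv_one_add_mul_mul_eq {α ι κ : Type*} [CommRing α] [Fintype ι]
    [DecidableEq ι] [Fintype κ] [DecidableEq κ] (S : Matrix ι ι α) (B : Matrix ι κ α)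
    (C : Matrix κ ι α)
    {R : Matrix κ κ α} (hR : IsUnit R) (hK : IsUnit (R + C * (S * S) * B)) :
    S * (1 + S * B * R⁻¹ * C * S)⁻¹ * S =
      S * S - S * S * B * (R + C * (S * S) * B)⁻¹ * C * (S * S) := by
  have hRR : R⁻¹⁻¹ = R := nonsing_inv_nonsing_inv R ((isUnit_iff_isUnit_det R).1 hR)
  have hK' : IsUnit (R⁻¹⁻¹ + C * S * (1 : Matrix ι ι α)⁻¹ * (S * B)) := by
    simpa only [hRR, inv_one, Matrix.mul_one, Matrix.mul_assoc] using hK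
  rw [show S * B * R⁻¹ * C * S = (S * B) * R⁻¹ * (C * S) by simp only [Matrix.mul_assoc],
    add_mul_mul_inv_eq_sub 1 _ _ _ isUnit_one (isUnit_nonsing_inv_iff.2 hR) hK']
  simp only [hRR, inv_one, Matrix.mul_one, Matrix.one_mul, Matrix.mul_sub, Matrix.sub_mul,
    Matrix.mul_assoc]

theorem msqrt_mul_self {d : ℕ} {X : Matrix (Fin d) (Fin d) ℝ} (hX : X.PosSemidef) :
    msqrt X * msqrt X = X := by
  have hUU : (star hX.1.eigenvectorUnitary : Matrix (Fin d) (Fin d) ℝ) *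
      (hX.1.eigenvectorUnitary : Matrix (Fin d) (Fin d) ℝ) = 1 := Unitary.coe_star_mul_self _
  have hsqrt : ∀ i, √(hX.1.eigenvalues i) * √(hX.1.eigenvalues i) = hX.1.eigenvalues i :=
    fun i => Real.mul_self_sqrt (hX.eigenvalues_nonneg i)
  conv_rhs => rw [hX.1.spectral_theorem, Unitary.conjStarAlgAut_apply]
  simp only [msqrt, dif_pos hX, Matrix.mul_assoc]
  rw [← Matrix.mul_assoc _ (hX.1.eigenvectorUnitary : Matrix (Fin d) (Fin d) ℝ), hUU,
    Matrix.one_mul, ← Matrix.mul_assoc (diagonal _), diagonal_mul_diagonal]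
  simp [hsqrt]

theorem msqrt_mul_inv_one_add_mul_msqrt {n m : ℕ} {B : Matrix (Fin n) (Fin m) ℝ}
    {R : Matrix (Fin m) (Fin m) ℝ} (hR : R.PosDef) {Y : Matrix (Fin n) (Fin n) ℝ}
    (hY : Y.PosSemidef) :
    msqrt Y * (1 + msqrt Y * B * R⁻¹ * Bᵀ * msqrt Y)⁻¹ * msqrt Y = kalmanUpdate B R Y := by
  have hK : (R + Bᵀ * Y * B).PosDef := by
    simpa using hR.add_posSemidef (hY.conjTranspose_mul_mul_same B)
  rw [mul_inv_one_add_mul_mul_eq _ _ _ hR.isUnit (by rw [msqrt_mul_self hY]; exact hK.isUnit),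
    msqrt_mul_self hY, kalmanUpdate, conjTranspose_eq_transpose_of_trivial]

theorem fmap_monotone_general {n m : ℕ}
    (B : Matrix (Fin n) (Fin m) ℝ) (R : Matrix (Fin m) (Fin m) ℝ) (hR : R.PosDef)
    (Y₁ Y₂ : Matrix (Fin n) (Fin n) ℝ) (hY₁ : Y₁.PosSemidef) (hY₂ : Y₂.PosSemidef)
    (h : (Y₁ - Y₂).PosSemidef) :
    (msqrt Y₁ * (1 + msqrt Y₁ * B * R⁻¹ * Bᵀ * msqrt Y₁)⁻¹ * msqrt Y₁ -
      msqrt Y₂ * (1 + msqrt Y₂ * B * R⁻¹ * Bᵀ * msqrt Y₂)⁻¹ * msqrt Y₂).PosSemidef := by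
  rw [msqrt_mul_inv_one_add_mul_msqrt hR hY₁, msqrt_mul_inv_one_add_mul_msqrt hR hY₂]
  exact kalmanUpdate_mono hR hY₂ h

theorem fmap_monotone {n m : ℕ} (hn : 1 ≤ n) (hm : 1 ≤ m)
    (B : Matrix (Fin n) (Fin m) ℝ) (R : Matrix (Fin m) (Fin m) ℝ) (hR : R.PosDef)
    (Y₁ Y₂ : Matrix (Fin n) (Fin n) ℝ) (hY₁ : Y₁.PosSemidef) (hY₂ : Y₂.PosSemidef)
    (h : (Y₁ - Y₂).PosSemidef) :
    (msqrt Y₁ * (1 + msqrt Y₁ * B * R⁻¹ * Bᵀ * msqrt Y₁)⁻¹ * msqrt Y₁ -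
      msqrt Y₂ * (1 + msqrt Y₂ * B * R⁻¹ * Bᵀ * msqrt Y₂)⁻¹ * msqrt Y₂).PosSemidef :=
  fmap_monotone_general B R hR Y₁ Y₂ hY₁ hY₂ h
end
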